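/- arXiv:2502.14176 — 14 statements merged into one kernel-verified Lean document; each statement's English description precedes it below -/
import Mathlib

section
/- If a Kripke-Lewis frame violates property (P*2), i.e., there exist a state s, a nonempty event E, and s' with sBs' such that f(s',E) ⊄ E, then B(p > p) is not valid on the frame: there is a model based on that frame (setting ‖p‖ = E for an atomic formula p) and a state at which B(p > p) fails. -/
inductive Form : Type where
  | atom : ℕ → Form
  | neg : Form → Form
  | or : Form → Form → Form

namespace Form
def imp (φ ψ : Form) : Form := .or (.neg φ) ψ
def and' (φ ψ : Form) : Form := .neg (.or (.neg φ) (.neg ψ))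
def iff' (φ ψ : Form) : Form := and' (imp φ ψ) (imp ψ φ)
end Form

/-- A Kripke-Lewis frame: states, a serial belief relation, and a selection function. -/
structure Frame (S : Type) where
  B : S → S → Prop
  serial : ∀ s, ∃ t, B s t
  f : S → Set S → Set S

/-- A model adds a valuation to a frame. -/
structure Model (S : Type) extends Frame S where
  V : ℕ → Set S

/-- Truth set of a Boolean formula in a model. -/
def truthSet {S : Type} (M : Model S) : Form → Set S
  | .atom n => M.V n
  | .neg φ => (truthSet M φ)ᶜ
  | .or φ ψ => truthSet M φ ∪ truthSet M ψ

/-- s ⊨ φ > ψ : either ‖φ‖ = ∅, or f(s,‖φ‖) ⊆ ‖ψ‖. -/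
def Cond {S : Type} (M : Model S) (s : S) (φ ψ : Form) : Prop :=
  truthSet M φ = ∅ ∨ M.f s (truthSet M φ) ⊆ truthSet M ψ

/-- s ⊨ Bφ for Boolean φ. -/
def Bel {S : Type} (M : Model S) (s : S) (φ : Form) : Prop :=
  ∀ t, M.B s t → t ∈ truthSet M φ

/-- s ⊨ B(φ > ψ). -/
def BelCond {S : Type} (M : Model S) (s : S) (φ ψ : Form) : Prop :=
  ∀ t, M.B s t → Cond M t φ ψ

/-- Classical evaluation of Boolean formulas under a propositional valuation. -/
def eval (v : ℕ → Prop) : Form → Prop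
  | .atom n => v n
  | .neg φ => ¬ eval v φ
  | .or φ ψ => eval v φ ∨ eval v ψ

def Tautology (φ : Form) : Prop := ∀ v : ℕ → Prop, eval v φ

def verum : Form := .or (.atom 0) (.neg (.atom 0))

/-- Deductive closure: ψ ∈ Cn K iff some finite conjunction of members of K
tautologically implies ψ. -/
def Cn (K : Set Form) : Set Form :=
  {ψ | ∃ l : List Form, (∀ φ ∈ l, φ ∈ K) ∧ Tautology ((l.foldr Form.and' verum).imp ψ)}

/-- K_{s,M}: the set of Boolean formulas believed at s. -/
def beliefSet {S : Type} (M : Model S) (s : S) : Set Form :=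
  {φ | ∀ t, M.B s t → t ∈ truthSet M φ}

/-- (RI): ψ ∈ K_s ∘ φ iff for all s' ∈ B(s), f(s',‖φ‖) ⊆ ‖ψ‖. -/
def revises {S : Type} (M : Model S) (s : S) (φ ψ : Form) : Prop :=
  ∀ t, M.B s t → M.f t (truthSet M φ) ⊆ truthSet M ψ

theorem stmt1 {S : Type} (Fr : Frame S) (s s' : S) (E : Set S)
    (hE : E.Nonempty) (hB : Fr.B s s') (hf : ¬ Fr.f s' E ⊆ E) :
    ∃ M : Model S, M.toFrame = Fr ∧ truthSet M (.atom 0) = E ∧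
      ¬ BelCond M s (.atom 0) (.atom 0) := by
  refine ⟨⟨Fr, fun _ => E⟩, rfl, rfl, fun h => ?_⟩
  rcases h s' hB with h0 | h0
  · exact hE.ne_empty h0
  · exact hf h0
end

section
/- On every Kripke-Lewis frame satisfying property (P*3) (for all s, all nonempty E, and all s' with sBs': if s' ∈ E then s' ∈ ⋃_{x : sBx} f(x,E)), the modal formula (¬□¬φ ∧ B(φ > ψ)) → B(φ → ψ) is valid for all Boolean formulas φ, ψ. -/
theorem stmt2 {S : Type} (M : Model S)
    (hP3 : ∀ (s : S) (E : Set S) (s' : S), E.Nonempty → M.B s s' → s' ∈ E →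
      ∃ x, M.B s x ∧ s' ∈ M.f x E) :
    ∀ (φ ψ : Form) (s : S), truthSet M φ ≠ ∅ → BelCond M s φ ψ →
      Bel M s (φ.imp ψ) := by
  intro φ ψ s hne hbc t hBt
  simp only [Form.imp, truthSet, Set.mem_union, Set.mem_compl_iff]
  by_cases ht : t ∈ truthSet M φ
  · right
    obtain ⟨x, hBx, hfx⟩ := hP3 s (truthSet M φ) t (Set.nonempty_iff_ne_empty.mpr hne) hBt ht
    rcases hbc x hBx with h | h
    · exact absurd h hne
    · exact h hfx
  · left; exact ht
end

section
/- If a Kripke-Lewis frame violates property (P*3), i.e., there exist a state s, a nonempty event E, and s' with sBs' such that s' ∈ E but s' ∉ ⋃_{x : sBx} f(x,E), then the formula (¬□¬p ∧ B(p > q)) → B(p → q) fails at s in the model where ‖p‖ = E and ‖q‖ = ⋃_{x : sBx} f(x,E) for atoms p, q. -/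
theorem stmt3 {S : Type} (Fr : Frame S) (s s' : S) (E : Set S)
    (hE : E.Nonempty) (hB : Fr.B s s') (hsE : s' ∈ E)
    (hviol : ¬ ∃ x, Fr.B s x ∧ s' ∈ Fr.f x E) :
    ∃ M : Model S, M.toFrame = Fr ∧ truthSet M (.atom 0) = E ∧
      truthSet M (.atom 1) = {y | ∃ x, Fr.B s x ∧ y ∈ Fr.f x E} ∧
      truthSet M (.atom 0) ≠ ∅ ∧ BelCond M s (.atom 0) (.atom 1) ∧
      ¬ Bel M s (Form.imp (.atom 0) (.atom 1)) := by
  classical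
  let M : Model S := { toFrame := Fr, V := fun n => match n with | 0 => E | _ => {y | ∃ x, Fr.B s x ∧ y ∈ Fr.f x E} }
  have hp : truthSet M (.atom 0) = E := rfl
  have hq : truthSet M (.atom 1) = {y | ∃ x, Fr.B s x ∧ y ∈ Fr.f x E} := rfl
  refine ⟨M, rfl, hp, hq, ?_, ?_, ?_⟩
  · rw [hp]; exact hE.ne_empty
  · intro t ht
    right
    rw [hp, hq]
    intro y hy
    exact ⟨t, ht, hy⟩
  · intro h
    have h' := h s' hB
    rcases h' with h1 | h2
    · rw [truthSet, hp] at h1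
      exact h1 hsE
    · rw [hq] at h2
      exact hviol h2
end

section
/- On every Kripke-Lewis frame satisfying property (P*4) (for all s and all nonempty E: if B(s) ∩ E ≠ ∅ then for all s' with sBs', f(s',E) ⊆ B(s) ∩ E, where B(s) = {x : sBx}), the modal formula (¬B¬φ ∧ B(φ → ψ)) → B(φ > ψ) is valid for all Boolean formulas φ, ψ. -/
theorem stmt4 {S : Type} (M : Model S)
    (hP4 : ∀ (s : S) (E : Set S), E.Nonempty → ({x | M.B s x} ∩ E).Nonempty →
      ∀ s', M.B s s' → M.f s' E ⊆ {x | M.B s x} ∩ E) :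
    ∀ (φ ψ : Form) (s : S), ¬ Bel M s (.neg φ) → Bel M s (φ.imp ψ) →
      BelCond M s φ ψ := by
  intro φ ψ s hnb hb t hst
  right
  simp only [Bel, truthSet, Set.mem_compl_iff, not_forall] at hnb
  obtain ⟨u, hsu, hu⟩ := hnb
  simp only [not_not] at hu
  have hne : (truthSet M φ).Nonempty := ⟨u, hu⟩
  have hint : ({x | M.B s x} ∩ truthSet M φ).Nonempty := ⟨u, hsu, hu⟩
  intro x hx
  have := hP4 s (truthSet M φ) hne hint t hst hx
  have h2 := hb x this.1
  simp only [Form.imp, truthSet, Set.mem_union, Set.mem_compl_iff] at h2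
  exact h2.resolve_left (fun h => h this.2)
end

section
/- If a Kripke-Lewis frame violates property (P*4), i.e., there exist a state s, ŝ with sBŝ, and nonempty E with B(s) ∩ E ≠ ∅ but f(ŝ,E) ⊄ B(s) ∩ E, then in the model with ‖p‖ = E and ‖q‖ = B(s) ∩ E, the state s satisfies ¬B¬p and B(p → q) but not B(p > q), so the formula (¬B¬φ ∧ B(φ → ψ)) → B(φ > ψ) is not valid on the frame. -/
theorem stmt5 {S : Type} (Fr : Frame S) (s shat : S) (E : Set S)
    (hB : Fr.B s shat) (hE : E.Nonempty) (hBE : ({x | Fr.B s x} ∩ E).Nonempty)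
    (hviol : ¬ Fr.f shat E ⊆ {x | Fr.B s x} ∩ E) :
    ∃ M : Model S, M.toFrame = Fr ∧ truthSet M (.atom 0) = E ∧
      truthSet M (.atom 1) = {x | Fr.B s x} ∩ E ∧
      ¬ Bel M s (.neg (.atom 0)) ∧ Bel M s (Form.imp (.atom 0) (.atom 1)) ∧
      ¬ BelCond M s (.atom 0) (.atom 1) := by
  classical
  refine ⟨⟨Fr, fun n => if n = 0 then E else {x | Fr.B s x} ∩ E⟩, rfl, by simp [truthSet], by simp [truthSet], ?_, ?_, ?_⟩
  · intro h
    obtain ⟨x, hx, hxE⟩ := hBE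
    exact h x hx (by simpa [truthSet] using hxE)
  · intro t ht
    simp [Form.imp, truthSet]
    by_cases htE : t ∈ E
    · exact Or.inr ⟨ht, htE⟩
    · exact Or.inl htE
  · intro h
    rcases h shat hB with h0 | h1
    · obtain ⟨x, hx⟩ := hE
      simp [truthSet] at h0
      exact absurd h0 (by exact Set.nonempty_iff_ne_empty.mp ⟨x, hx⟩)
    · simp [truthSet] at h1
      exact hviol (Set.subset_inter h1.1 h1.2)
end

section
/- On every Kripke-Lewis frame satisfying property (P*5) (for all s and all nonempty E there exists s' with sBs' such that f(s',E) ≠ ∅), the modal formula (¬□¬φ ∧ B(φ > ψ)) → ¬B(φ > ¬ψ) is valid for all Boolean formulas φ, ψ. -/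
theorem stmt6 {S : Type} (M : Model S)
    (hP5 : ∀ (s : S) (E : Set S), E.Nonempty → ∃ s', M.B s s' ∧ (M.f s' E).Nonempty) :
    ∀ (φ ψ : Form) (s : S), truthSet M φ ≠ ∅ → BelCond M s φ ψ →
      ¬ BelCond M s φ (.neg ψ) := by
  intro φ ψ s hne h1 h2
  obtain ⟨s', hB, x, hx⟩ := hP5 s (truthSet M φ) (Set.nonempty_iff_ne_empty.2 hne)
  rcases h1 s' hB with h | h
  · exact hne h
  rcases h2 s' hB with h' | h'
  · exact hne h'
  exact h' hx (h hx)
end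

section
/- If a Kripke-Lewis frame violates property (P*5), i.e., there exist a state s and a nonempty event E with f(s',E) = ∅ for every s' with sBs', then in the model where ‖p‖ = E and ‖q‖ = ∅, state s satisfies ¬□¬p, B(p > q), and B(p > ¬q), yielding a counterexample to (¬□¬φ ∧ B(φ > ψ)) → ¬B(φ > ¬ψ). -/
theorem stmt7 {S : Type} (Fr : Frame S) (s : S) (E : Set S)
    (hE : E.Nonempty) (hviol : ∀ s', Fr.B s s' → Fr.f s' E = ∅) :
    ∃ M : Model S, M.toFrame = Fr ∧ truthSet M (.atom 0) = E ∧
      truthSet M (.atom 1) = ∅ ∧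
      truthSet M (.atom 0) ≠ ∅ ∧ BelCond M s (.atom 0) (.atom 1) ∧
      BelCond M s (.atom 0) (.neg (.atom 1)) := by
  refine ⟨⟨Fr, fun n => if n = 0 then E else ∅⟩, rfl, ?_, ?_, ?_, ?_, ?_⟩
  · simp [truthSet]
  · simp [truthSet]
  · simp [truthSet]; exact Set.nonempty_iff_ne_empty.mp hE
  · intro t ht; right
    have : (Model.mk Fr fun n => if n = 0 then E else ∅).f t (truthSet (Model.mk Fr fun n => if n = 0 then E else ∅) (.atom 0)) = ∅ := by
      simpa [truthSet] using hviol t ht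
    rw [this]; exact Set.empty_subset _
  · intro t ht; right
    have : (Model.mk Fr fun n => if n = 0 then E else ∅).f t (truthSet (Model.mk Fr fun n => if n = 0 then E else ∅) (.atom 0)) = ∅ := by
      simpa [truthSet] using hviol t ht
    rw [this]; exact Set.empty_subset _
end

section
/- On every Kripke-Lewis frame satisfying property (P*7) (for all s and all E, F, G with E ∩ F ≠ ∅: if f(s', E ∩ F) ⊆ G for all s' with sBs', then f(s',E) ∩ F ⊆ G for all s' with sBs'), the modal formula (¬□¬(φ∧ψ) ∧ B((φ∧ψ) > χ)) → B(φ > (ψ → χ)) is valid for all Boolean formulas φ, ψ, χ. -/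
theorem stmt8 {S : Type} (M : Model S)
    (hP7 : ∀ (s : S) (E F G : Set S), (E ∩ F).Nonempty →
      (∀ s', M.B s s' → M.f s' (E ∩ F) ⊆ G) →
      ∀ s', M.B s s' → M.f s' E ∩ F ⊆ G) :
    ∀ (φ ψ χ : Form) (s : S), truthSet M (φ.and' ψ) ≠ ∅ →
      BelCond M s (φ.and' ψ) χ → BelCond M s φ (ψ.imp χ) := by
  intro φ ψ χ s hne hbc t hbt
  have hand : truthSet M (φ.and' ψ) = truthSet M φ ∩ truthSet M ψ := by
    simp [Form.and', truthSet, Set.compl_union, compl_compl]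
  right
  have hne' : (truthSet M φ ∩ truthSet M ψ).Nonempty := by
    rw [← hand]; exact Set.nonempty_iff_ne_empty.2 hne
  have h1 : ∀ s', M.B s s' → M.f s' (truthSet M φ ∩ truthSet M ψ) ⊆ truthSet M χ := by
    intro s' hb
    rcases hbc s' hb with h | h
    · exact absurd (hand ▸ h) (Set.nonempty_iff_ne_empty.1 hne')
    · rwa [hand] at h
  have h2 := hP7 s (truthSet M φ) (truthSet M ψ) (truthSet M χ) hne' h1 t hbt
  intro x hx
  simp only [Form.imp, truthSet, Set.mem_union, Set.mem_compl_iff]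
  by_cases hψ : x ∈ truthSet M ψ
  · exact Or.inr (h2 ⟨hx, hψ⟩)
  · exact Or.inl hψ
end

section
/- If a Kripke-Lewis frame violates property (P*7), i.e., there exist a state s and events E, F, G with E ∩ F ≠ ∅ such that f(s', E ∩ F) ⊆ G for all s' with sBs' but f(ŝ,E) ∩ F ⊄ G for some ŝ with sBŝ, then in the model with ‖p‖ = E, ‖q‖ = F, ‖r‖ = G, state s satisfies ¬□¬(p∧q) and B((p∧q) > r) but not B(p > (q → r)). -/
theorem stmt9 {S : Type} (Fr : Frame S) (s shat : S) (E F G : Set S)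
    (hEF : (E ∩ F).Nonempty)
    (h1 : ∀ s', Fr.B s s' → Fr.f s' (E ∩ F) ⊆ G)
    (hB : Fr.B s shat) (h2 : ¬ Fr.f shat E ∩ F ⊆ G) :
    ∃ M : Model S, M.toFrame = Fr ∧ truthSet M (.atom 0) = E ∧
      truthSet M (.atom 1) = F ∧ truthSet M (.atom 2) = G ∧
      truthSet M (Form.and' (.atom 0) (.atom 1)) ≠ ∅ ∧
      BelCond M s (Form.and' (.atom 0) (.atom 1)) (.atom 2) ∧
      ¬ BelCond M s (.atom 0) (Form.imp (.atom 1) (.atom 2)) := by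
  classical
  refine ⟨⟨Fr, fun n => if n = 0 then E else if n = 1 then F else G⟩, rfl, ?_, ?_, ?_, ?_, ?_, ?_⟩
  · simp [truthSet]
  · simp [truthSet]
  · simp [truthSet]
  all_goals
    have hpq : truthSet ⟨Fr, fun n => if n = 0 then E else if n = 1 then F else G⟩
        (Form.and' (.atom 0) (.atom 1)) = E ∩ F := by
      simp [Form.and', truthSet, Set.compl_union]
  · intro h
    rw [hpq] at h
    exact hEF.ne_empty h
  · intro t ht
    right
    rw [hpq]
    simpa [truthSet] using h1 t ht
  · intro h
    rcases h shat hB with h' | h'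
    · simp only [truthSet] at h'
      exact hEF.ne_empty (by simpa using Set.subset_empty_iff.mp (by rw [← h']; exact Set.inter_subset_left))
    · apply h2
      intro x hx
      have := h' hx.1
      simp only [Form.imp, truthSet, Set.mem_union, Set.mem_compl_iff] at this
      rcases this with h'' | h''
      · exact absurd (by simpa using hx.2) h''
      · simpa using h''
end

section
/- On every Kripke-Lewis frame satisfying property (P*8) (for all s and all nonempty E, F: if there exists ŝ with sBŝ and f(ŝ,E) ∩ F ≠ ∅, then for all s' with sBs', f(s', E ∩ F) ⊆ ⋃_{x : sBx} (f(x,E) ∩ F)), the modal formula (¬B(φ > ¬ψ) ∧ B(φ > (ψ → χ))) → B((φ∧ψ) > (ψ∧χ)) is valid for all Boolean formulas φ, ψ, χ. -/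
theorem stmt10 {S : Type} (M : Model S)
    (hP8 : ∀ (s : S) (E F : Set S), E.Nonempty → F.Nonempty →
      (∃ shat, M.B s shat ∧ (M.f shat E ∩ F).Nonempty) →
      ∀ s', M.B s s' → M.f s' (E ∩ F) ⊆ {y | ∃ x, M.B s x ∧ y ∈ M.f x E ∩ F}) :
    ∀ (φ ψ χ : Form) (s : S), ¬ BelCond M s φ (.neg ψ) →
      BelCond M s φ (ψ.imp χ) →
      BelCond M s (φ.and' ψ) (ψ.and' χ) := by
  intro φ ψ χ s hneg hcond
  -- extract witness from hneg
  simp only [BelCond, not_forall] at hneg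
  obtain ⟨that, hBhat, hnc⟩ := hneg
  unfold Cond at hnc
  push_neg at hnc
  obtain ⟨hφne, hnsub⟩ := hnc
  rw [Set.not_subset] at hnsub
  obtain ⟨y, hyf, hyψ⟩ := hnsub
  simp only [truthSet, Set.mem_compl_iff, not_not] at hyψ
  have hEne : (truthSet M φ).Nonempty := hφne
  have hFne : (truthSet M ψ).Nonempty := ⟨y, hyψ⟩
  have hwit : ∃ shat, M.B s shat ∧ (M.f shat (truthSet M φ) ∩ truthSet M ψ).Nonempty :=
    ⟨that, hBhat, y, hyf, hyψ⟩
  have key := hP8 s (truthSet M φ) (truthSet M ψ) hEne hFne hwit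
  intro t hBt
  right
  have hts : truthSet M (φ.and' ψ) = truthSet M φ ∩ truthSet M ψ := by
    simp [Form.and', truthSet, Set.compl_union, compl_compl]
  intro z hz
  rw [hts] at hz
  obtain ⟨x, hBx, hzf, hzψ⟩ := key t hBt hz
  have hc := hcond x hBx
  rcases hc with h | h
  · exact absurd h hφne.ne_empty
  · have hz2 := h hzf
    simp only [Form.imp, truthSet, Set.mem_union, Set.mem_compl_iff] at hz2
    simp only [Form.and', truthSet, Set.mem_compl_iff, Set.mem_union, not_or, not_not]
    rcases hz2 with h' | h'
    · exact absurd hzψ h'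
    · exact ⟨hzψ, h'⟩
end

section
/- In every model based on a Kripke-Lewis frame satisfying (P*3) (for all s, nonempty E, and s' ∈ B(s): s' ∈ E implies s' ∈ ⋃_{x ∈ B(s)} f(x,E)), the belief change function defined by (RI) satisfies AGM inclusion: for every Boolean φ with ‖φ‖ ≠ ∅ and every ψ ∈ K_s ∘ φ, the formula φ → ψ belongs to K_s (hence K_s ∘ φ ⊆ K_s + φ). -/
theorem stmt15 {S : Type} (M : Model S)
    (hP3 : ∀ (s : S) (E : Set S) (s' : S), E.Nonempty → M.B s s' → s' ∈ E →
      ∃ x, M.B s x ∧ s' ∈ M.f x E) :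
    ∀ (φ ψ : Form) (s : S), truthSet M φ ≠ ∅ → revises M s φ ψ →
      φ.imp ψ ∈ beliefSet M s ∧ ψ ∈ Cn (beliefSet M s ∪ {φ}) := by
  intro φ ψ s hne hrev
  have himp : φ.imp ψ ∈ beliefSet M s := by
    intro t ht
    simp only [Form.imp, truthSet, Set.mem_union, Set.mem_compl_iff]
    by_cases hφ : t ∈ truthSet M φ
    · right
      obtain ⟨x, hx, hmem⟩ := hP3 s (truthSet M φ) t (Set.nonempty_iff_ne_empty.mpr hne) ht hφ
      exact hrev x hx hmem
    · left; exact hφ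
  refine ⟨himp, ⟨[φ.imp ψ, φ], ?_, ?_⟩⟩
  · intro χ hχ
    simp only [List.mem_cons, List.mem_singleton] at hχ
    rcases hχ with h | h | h
    · exact Or.inl (h ▸ himp)
    · exact Or.inr (h ▸ rfl)
    · cases h
  · intro v
    simp only [List.foldr, Form.imp, Form.and', verum, eval]
    tauto
end

section
/- If a Kripke-Lewis frame violates (P*3), i.e., there exist s, s' ∈ B(s), and an event E with s' ∈ E and s' ∉ ⋃_{x ∈ B(s)} f(x,E), then in the model with ‖p‖ = E and ‖q‖ = ⋃_{x ∈ B(s)} f(x,E), one has q ∈ K_s ∘ p but (p → q) ∉ K_s, so that K_s ∘ p ⊄ K_s + p (AGM axiom (K*3) fails). -/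
lemma eval_truth {S : Type} (M : Model S) (t : S) :
    ∀ φ : Form, eval (fun n => t ∈ M.V n) φ ↔ t ∈ truthSet M φ
  | .atom n => Iff.rfl
  | .neg φ => by simp [eval, truthSet, eval_truth M t φ]
  | .or φ ψ => by simp [eval, truthSet, eval_truth M t φ, eval_truth M t ψ]

lemma eval_foldr (v : ℕ → Prop) (l : List Form) (h : ∀ φ ∈ l, eval v φ) :
    eval v (l.foldr Form.and' verum) := by
  induction l with
  | nil => simp [eval, verum]; tauto
  | cons a l ih =>
      simp only [List.foldr]
      have ha := h a (by simp)
      have hl := ih (fun φ hφ => h φ (by simp [hφ]))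
      simp [Form.and', eval]; tauto

theorem stmt16 {S : Type} (Fr : Frame S) (s s' : S) (E : Set S)
    (hE : E.Nonempty) (hB : Fr.B s s') (hsE : s' ∈ E)
    (hviol : ¬ ∃ x, Fr.B s x ∧ s' ∈ Fr.f x E) :
    ∃ M : Model S, M.toFrame = Fr ∧ truthSet M (.atom 0) = E ∧
      truthSet M (.atom 1) = {y | ∃ x, Fr.B s x ∧ y ∈ Fr.f x E} ∧
      revises M s (.atom 0) (.atom 1) ∧
      Form.imp (.atom 0) (.atom 1) ∉ beliefSet M s ∧
      (Form.atom 1) ∉ Cn (beliefSet M s ∪ {Form.atom 0}) := by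
  refine ⟨⟨Fr, fun n => if n = 0 then E else {y | ∃ x, Fr.B s x ∧ y ∈ Fr.f x E}⟩,
    rfl, rfl, rfl, ?_, ?_, ?_⟩
  · intro t hBt y hy
    exact ⟨t, hBt, hy⟩
  · intro h
    have := h s' hB
    simp [truthSet, Form.imp] at this
    rcases this with h | h
    · exact h hsE
    · exact hviol h
  · rintro ⟨l, hl, htaut⟩
    set M : Model S := ⟨Fr, fun n => if n = 0 then E else {y | ∃ x, Fr.B s x ∧ y ∈ Fr.f x E}⟩
    set v : ℕ → Prop := fun n => s' ∈ M.V n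
    have hv : ∀ φ ∈ l, eval v φ := by
      intro φ hφ
      rcases hl φ hφ with h | h
      · exact (eval_truth M s' φ).2 (h s' hB)
      · simp only [Set.mem_singleton_iff] at h
        subst h
        simpa [eval, v, M] using hsE
    have := htaut v
    simp only [Form.imp, eval] at this
    rcases this with h | h
    · exact h (eval_foldr v l hv)
    · exact hviol (by simpa [eval, v, M] using h)
end

section
/- In every model based on a Kripke-Lewis frame satisfying (P*5) (for all s and nonempty E there exists s' ∈ B(s) with f(s',E) ≠ ∅), the belief change function defined by (RI) satisfies: for every Boolean formula φ with ‖φ‖ ≠ ∅, K_s ∘ φ ≠ Φ₀; specifically, the contradiction p ∧ ¬p does not belong to K_s ∘ φ. -/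
theorem stmt17 {S : Type} (M : Model S)
    (hP5 : ∀ (s : S) (E : Set S), E.Nonempty → ∃ s', M.B s s' ∧ (M.f s' E).Nonempty) :
    ∀ (φ : Form) (s : S), truthSet M φ ≠ ∅ →
      (∀ p : ℕ, ¬ revises M s φ (Form.and' (.atom p) (.neg (.atom p)))) ∧
      {ψ | revises M s φ ψ} ≠ Set.univ := by
  intro φ s hφ
  have key : ∀ p : ℕ, ¬ revises M s φ (Form.and' (.atom p) (.neg (.atom p))) := by
    intro p hrev
    obtain ⟨s', hB, x, hx⟩ := hP5 s (truthSet M φ) (Set.nonempty_iff_ne_empty.mpr hφ)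
    have := hrev s' hB hx
    simp [truthSet, Form.and'] at this
  refine ⟨key, fun h => key 0 ?_⟩
  have : Form.and' (.atom 0) (.neg (.atom 0)) ∈ ({ψ | revises M s φ ψ} : Set Form) := by
    rw [h]; trivial
  exact this
end

section
/- If a Kripke-Lewis frame violates (P*5), i.e., there exist a state s and a nonempty event E with f(s',E) = ∅ for all s' ∈ B(s), then in the model with ‖p‖ = E, the belief change function defined by (RI) satisfies K_s ∘ p = Φ₀, i.e., every Boolean formula belongs to K_s ∘ p. -/
theorem stmt18 {S : Type} (Fr : Frame S) (s : S) (E : Set S)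
    (hE : E.Nonempty) (hviol : ∀ s', Fr.B s s' → Fr.f s' E = ∅) :
    ∃ M : Model S, M.toFrame = Fr ∧ truthSet M (.atom 0) = E ∧
      ∀ ψ : Form, revises M s (.atom 0) ψ := by
  refine ⟨⟨Fr, fun _ => E⟩, rfl, rfl, fun ψ t ht => ?_⟩
  intro x hx
  have : Fr.f t E = ∅ := hviol t ht
  simp only [truthSet] at hx
  rw [this] at hx
  exact absurd hx (Set.notMem_empty x)
end
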